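/- Let a^P(u,v) = ∫_P ⟨K∇u,∇v⟩ be a symmetric coercive bilinear form on a finite-dimensional space V(P) containing P_k(P), let Π = Π^∇_k be a projection onto P_k(P) satisfying a^P(Πv, q) = a^P(v,q) for all q ∈ P_k(P), and let S^P be a symmetric bilinear form satisfying c_* a^P(v,v) ≤ S^P(v,v) ≤ c^* a^P(v,v) for all v ∈ V(P) with Πv = 0. Then the discrete form a_h^P(u,v) := a^P(Πu, Πv) + S^P((I−Π)u, (I−Π)v) satisfies: (i) k-consistency: a_h^P(v,q) = a^P(v,q) for all v ∈ V(P), q ∈ P_k(P); and (ii) stability: min{1,c_*} a^P(v,v) ≤ a_h^P(v,v) ≤ max{1,c^*} a^P(v,v) for all v ∈ V(P). -/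

import Mathlib

/-!
Since `Π` is an `a^P`-orthogonal projection, `v = Πv + (I - Π)v` is an `a^P`-orthogonal splitting,
so `a^P(v, v) = a^P(Πv, Πv) + a^P((I - Π)v, (I - Π)v)`. The discrete form keeps the first summand
and replaces the second by `S^P((I - Π)v, (I - Π)v)`, which is comparable to it because `(I - Π)v`
lies in the kernel of `Π`; for a polynomial `q` the stabilization term vanishes since `(I - Π)q = 0`.
-/

namespace LinearMap

variable {R M : Type*} [CommRing R] [AddCommGroup M] [Module R M]
  {p : Submodule R M} {P : M →ₗ[R] M}

theorem IsProj.map_sub_self (hP : IsProj p P) (v : M) : P (v - P v) = 0 := by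
  rw [map_sub, hP.map_id _ (hP.map_mem v), sub_self]

theorem IsProj.sub_self_of_mem (hP : IsProj p P) {q : M} (hq : q ∈ p) : q - P q = 0 := by
  rw [hP.map_id q hq, sub_self]

theorem IsSymm.apply_self_eq_add_of_isProj {A : M →ₗ[R] M →ₗ[R] R} (hA : A.IsSymm)
    (hP : IsProj p P) (horth : ∀ v, ∀ q ∈ p, A (P v) q = A v q) (v : M) :
    A v v = A (P v) (P v) + A (v - P v) (v - P v) := by
  have hPv : A (P v) (P v) = A v (P v) := horth v (P v) (hP.map_mem v)
  have hsymm : A (P v) v = A v (P v) := hA.eq (P v) v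
  simp only [map_sub, sub_apply]
  linear_combination hsymm - 2 * hPv

end LinearMap

open LinearMap

section StabilizedForm

variable {R M : Type*} [CommRing R] [AddCommGroup M] [Module R M]

def stabilizedForm (A S : M →ₗ[R] M →ₗ[R] R) (P : M →ₗ[R] M) (u v : M) : R :=
  A (P u) (P v) + S (u - P u) (v - P v)

variable {A S : M →ₗ[R] M →ₗ[R] R} {p : Submodule R M} {P : M →ₗ[R] M}

theorem stabilizedForm_of_mem (hP : IsProj p P) (horth : ∀ v, ∀ q ∈ p, A (P v) q = A v q)
    (v : M) {q : M} (hq : q ∈ p) : stabilizedForm A S P v q = A v q := by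
  rw [stabilizedForm, hP.sub_self_of_mem hq, map_zero, add_zero, hP.map_id q hq, horth v q hq]

variable [LinearOrder R] [IsOrderedRing R]

theorem min_one_mul_le_stabilizedForm_self (hA : A.IsPosSemidef) (hP : IsProj p P)
    (horth : ∀ v, ∀ q ∈ p, A (P v) q = A v q) {c : R} (hS : ∀ w, P w = 0 → c * A w w ≤ S w w)
    (v : M) : min 1 c * A v v ≤ stabilizedForm A S P v v := by
  set w := v - P v
  calc min 1 c * A v v = min 1 c * A (P v) (P v) + min 1 c * A w w := by
        rw [hA.isSymm.apply_self_eq_add_of_isProj hP horth v, mul_add]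
    _ ≤ A (P v) (P v) + c * A w w :=
        add_le_add (mul_le_of_le_one_left (hA.nonneg _) (min_le_left _ _))
          (mul_le_mul_of_nonneg_right (min_le_right _ _) (hA.nonneg _))
    _ ≤ stabilizedForm A S P v v := add_le_add_right (hS w (hP.map_sub_self v)) _

theorem stabilizedForm_self_le_max_one_mul (hA : A.IsPosSemidef) (hP : IsProj p P)
    (horth : ∀ v, ∀ q ∈ p, A (P v) q = A v q) {C : R} (hS : ∀ w, P w = 0 → S w w ≤ C * A w w)
    (v : M) : stabilizedForm A S P v v ≤ max 1 C * A v v := by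
  set w := v - P v
  calc stabilizedForm A S P v v ≤ A (P v) (P v) + C * A w w :=
        add_le_add_right (hS w (hP.map_sub_self v)) _
    _ ≤ max 1 C * A (P v) (P v) + max 1 C * A w w :=
        add_le_add (le_mul_of_one_le_left (hA.nonneg _) (le_max_left _ _))
          (mul_le_mul_of_nonneg_right (le_max_right _ _) (hA.nonneg _))
    _ = max 1 C * A v v := by rw [hA.isSymm.apply_self_eq_add_of_isProj hP horth v, mul_add]

end StabilizedForm

theorem vem_consistency_stability_general
    (V : Type*) [AddCommGroup V] [Module ℝ V]
    (Pk : Submodule ℝ V)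
    (A S : V →ₗ[ℝ] V →ₗ[ℝ] ℝ)
    (hAsymm : ∀ u v, A u v = A v u) (hAnonneg : ∀ v, 0 ≤ A v v)
    (Pr : V →ₗ[ℝ] V) (hrange : ∀ v, Pr v ∈ Pk) (hproj : ∀ q ∈ Pk, Pr q = q)
    (horth : ∀ v, ∀ q ∈ Pk, A (Pr v) q = A v q)
    (cs cS : ℝ)
    (hstab : ∀ v, Pr v = 0 → cs * A v v ≤ S v v ∧ S v v ≤ cS * A v v) :
    -- k-consistency
    (∀ v, ∀ q ∈ Pk,
      A (Pr v) (Pr q) + S (v - Pr v) (q - Pr q) = A v q) ∧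
    -- stability
    (∀ v, min 1 cs * A v v ≤ A (Pr v) (Pr v) + S (v - Pr v) (v - Pr v) ∧
      A (Pr v) (Pr v) + S (v - Pr v) (v - Pr v) ≤ max 1 cS * A v v) := by
  have hA : A.IsPosSemidef := ⟨⟨hAsymm⟩, ⟨hAnonneg⟩⟩
  have hP : IsProj Pk Pr := ⟨hrange, hproj⟩
  exact ⟨fun v _ hq => stabilizedForm_of_mem hP horth v hq, fun v =>
    ⟨min_one_mul_le_stabilizedForm_self hA hP horth (fun w hw => (hstab w hw).1) v,
      stabilizedForm_self_le_max_one_mul hA hP horth (fun w hw => (hstab w hw).2) v⟩⟩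

/-- The abstract VEM consistency–stability lemma. `V` is the (finite-dimensional)
local virtual element space `V(P) ⊇ P_k(P)`, `A = a^P` the exact symmetric
nonnegative bilinear form, `Pk` the polynomial subspace, `Pr = Π^∇_k` the
`A`-orthogonal projection onto `Pk`, and `S = S^P` a symmetric stabilizing form
equivalent to `A` on the kernel of `Π`. Then the discrete form
`a_h(u,v) = A(Pru,Πv) + S((I−Π)u,(I−Π)v)` is `k`-consistent and stable. -/
theorem vem_consistency_stability
    (V : Type*) [AddCommGroup V] [Module ℝ V] [FiniteDimensional ℝ V]
    (Pk : Submodule ℝ V)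
    (A S : V →ₗ[ℝ] V →ₗ[ℝ] ℝ)
    (hAsymm : ∀ u v, A u v = A v u) (hAnonneg : ∀ v, 0 ≤ A v v)
    (Pr : V →ₗ[ℝ] V) (hrange : ∀ v, Pr v ∈ Pk) (hproj : ∀ q ∈ Pk, Pr q = q)
    (horth : ∀ v, ∀ q ∈ Pk, A (Pr v) q = A v q)
    (hSsymm : ∀ u v, S u v = S v u)
    (cs cS : ℝ) (hcs : 0 < cs) (hc : cs ≤ cS)
    (hstab : ∀ v, Pr v = 0 → cs * A v v ≤ S v v ∧ S v v ≤ cS * A v v) :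
    -- k-consistency
    (∀ v, ∀ q ∈ Pk,
      A (Pr v) (Pr q) + S (v - Pr v) (q - Pr q) = A v q) ∧
    -- stability
    (∀ v, min 1 cs * A v v ≤ A (Pr v) (Pr v) + S (v - Pr v) (v - Pr v) ∧
      A (Pr v) (Pr v) + S (v - Pr v) (v - Pr v) ≤ max 1 cS * A v v) :=
  vem_consistency_stability_general V Pk A S hAsymm hAnonneg Pr hrange hproj horth cs cS hstab
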